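/- arXiv:1905.09898 — 3 statements merged into one kernel-verified Lean document; each statement's English description precedes it below -/
import Mathlib

section
/- Let G be a finite graph with k vertices, each vertex a having a gap Δ(a) ∈ (0,1], and let L > 0. Suppose a sequence of T vertex selections is made such that vertex a is never selected after it has been placed in a layer exceeding L/Δ(a)². Then the total regret Σ_t Δ(a^t) restricted to such selections is at most 4·log₂(T)·max over independent sets I of G of Σ_{a∈I} L/Δ(a), plus 1. -/
open Finset

private lemma sum_inv_succ_le (T : ℕ) :
    ∑ ℓ ∈ Finset.range T, (1 : ℝ) / (ℓ + 1) ≤ 1 + Real.log T := by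
  have h := harmonic_le_one_add_log T
  have : ((harmonic T : ℚ) : ℝ) = ∑ ℓ ∈ Finset.range T, (1 : ℝ) / (ℓ + 1) := by
    simp [harmonic, one_div]
  linarith [this ▸ h]

/-- Layering regret lemma: if every selection of an arm `a t` happens while its
(1-indexed) layer is at most `L / Δ(a t)²`, then the total regret `∑ t, Δ(a t)` is at
most `4 · log₂ T · max_{I independent} ∑_{a ∈ I} L / Δ(a) + 1`. The maximum over
independent sets is expressed via an upper bound `M` on all independent-set sums. -/
theorem layering_regret_bound {V : Type*} [Fintype V] [DecidableEq V]
    (G : SimpleGraph V) (T : ℕ)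
    (a : Fin T → V) (lay : Fin T → ℕ)
    (hvalid : ∀ s t : Fin T, s < t → lay s = lay t →
      ¬(a s = a t ∨ G.Adj (a s) (a t)))
    (hmin : ∀ t : Fin T, ∀ m < lay t, ∃ s : Fin T, s < t ∧ lay s = m ∧
      (a s = a t ∨ G.Adj (a s) (a t)))
    (Δ : V → ℝ) (hΔ : ∀ v, 0 < Δ v ∧ Δ v ≤ 1)
    (L : ℝ) (hL : 0 < L)
    (hsel : ∀ t : Fin T, ((lay t : ℝ) + 1) ≤ L / (Δ (a t)) ^ 2)
    (M : ℝ)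
    (hM : ∀ I : Finset V, (∀ u ∈ I, ∀ v ∈ I, u ≠ v → ¬ G.Adj u v) →
      ∑ v ∈ I, L / Δ v ≤ M) :
    ∑ t : Fin T, Δ (a t) ≤ 4 * Real.logb 2 T * M + 1 := by
  have hM0 : 0 ≤ M := by
    have := hM ∅ (by simp)
    simpa using this
  -- layers are < T
  have hlayT : ∀ t : Fin T, lay t < T := by
    intro t
    -- build an injection Fin (lay t) → Fin t.val
    have : ∀ m : Fin (lay t), ∃ s : Fin T, s < t ∧ lay s = m.val := by
      intro m
      obtain ⟨s, hs1, hs2, _⟩ := hmin t m.val m.isLt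
      exact ⟨s, hs1, hs2⟩
    choose g hg1 hg2 using this
    have hinj : Function.Injective (fun m : Fin (lay t) => (⟨(g m).val, hg1 m⟩ : Fin t.val)) := by
      intro m1 m2 h
      simp only [Fin.mk.injEq] at h
      have hg : g m1 = g m2 := Fin.ext h
      exact Fin.ext (by rw [← hg2 m1, ← hg2 m2, hg])
    have := Fintype.card_le_of_injective _ hinj
    simp only [Fintype.card_fin] at this
    exact lt_of_le_of_lt this t.isLt
  -- per-layer bound
  have hlayer : ∀ ℓ : ℕ, ∑ t ∈ Finset.univ.filter (fun t => lay t = ℓ), Δ (a t)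
      ≤ M * (1 / (ℓ + 1)) := by
    intro ℓ
    set S := Finset.univ.filter (fun t : Fin T => lay t = ℓ) with hS
    have hlayS : ∀ t ∈ S, lay t = ℓ := by intro t ht; simpa [hS] using ht
    have hinjS : ∀ x ∈ S, ∀ y ∈ S, a x = a y → x = y := by
      intro x hx y hy hxy
      by_contra hne
      rcases lt_or_gt_of_ne hne with h | h
      · exact hvalid x y h ((hlayS x hx).trans (hlayS y hy).symm) (Or.inl hxy)
      · exact hvalid y x h ((hlayS y hy).trans (hlayS x hx).symm) (Or.inl hxy.symm)
    have hsum : ∑ t ∈ S, Δ (a t) = ∑ v ∈ S.image a, Δ v :=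
      (Finset.sum_image hinjS).symm
    have hindep : ∀ u ∈ S.image a, ∀ v ∈ S.image a, u ≠ v → ¬ G.Adj u v := by
      intro u hu v hv huv
      obtain ⟨x, hx, rfl⟩ := Finset.mem_image.mp hu
      obtain ⟨y, hy, rfl⟩ := Finset.mem_image.mp hv
      rcases lt_trichotomy x y with h | h | h
      · intro hadj
        exact hvalid x y h ((hlayS x hx).trans (hlayS y hy).symm) (Or.inr hadj)
      · exact absurd (congrArg a h) huv
      · intro hadj
        exact hvalid y x h ((hlayS y hy).trans (hlayS x hx).symm)
          (Or.inr hadj.symm)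
    have hIM : ∑ v ∈ S.image a, L / Δ v ≤ M := hM _ hindep
    have hvbound : ∀ v ∈ S.image a, Δ v ≤ (L / Δ v) * (1 / (ℓ + 1)) := by
      intro v hv
      obtain ⟨t, ht, rfl⟩ := Finset.mem_image.mp hv
      have hsel' := hsel t
      rw [hlayS t ht] at hsel'
      have hΔpos := (hΔ (a t)).1
      have hℓpos : (0 : ℝ) < (ℓ : ℝ) + 1 := by positivity
      have h1 : ((ℓ : ℝ) + 1) * (Δ (a t)) ^ 2 ≤ L :=
        (le_div_iff₀ (by positivity : (0:ℝ) < (Δ (a t))^2)).mp hsel'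
      rw [div_mul_div_comm, mul_one, le_div_iff₀ (by positivity)]
      nlinarith [hΔpos]
    calc ∑ t ∈ S, Δ (a t) = ∑ v ∈ S.image a, Δ v := hsum
      _ ≤ ∑ v ∈ S.image a, (L / Δ v) * (1 / (ℓ + 1)) :=
          Finset.sum_le_sum hvbound
      _ = (∑ v ∈ S.image a, L / Δ v) * (1 / (ℓ + 1)) := by
          rw [Finset.sum_mul]
      _ ≤ M * (1 / (ℓ + 1)) := by
          have : (0:ℝ) ≤ 1 / ((ℓ:ℝ) + 1) := by positivity
          exact mul_le_mul_of_nonneg_right hIM this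
  -- total
  have htotal : ∑ t : Fin T, Δ (a t) ≤ M * (1 + Real.log T) := by
    have hfib : ∑ t : Fin T, Δ (a t)
        = ∑ ℓ ∈ Finset.range T, ∑ t ∈ Finset.univ.filter (fun t => lay t = ℓ), Δ (a t) := by
      rw [Finset.sum_fiberwise_of_maps_to (fun t _ => Finset.mem_range.mpr (hlayT t))]
    rw [hfib]
    calc ∑ ℓ ∈ Finset.range T, ∑ t ∈ Finset.univ.filter (fun t => lay t = ℓ), Δ (a t)
        ≤ ∑ ℓ ∈ Finset.range T, M * (1 / (ℓ + 1)) :=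
          Finset.sum_le_sum (fun ℓ _ => hlayer ℓ)
      _ = M * ∑ ℓ ∈ Finset.range T, (1 : ℝ) / (ℓ + 1) := by rw [Finset.mul_sum]
      _ ≤ M * (1 + Real.log T) := by
          exact mul_le_mul_of_nonneg_left (sum_inv_succ_le T) hM0
  -- conclude
  rcases lt_or_ge T 2 with hT | hT
  · interval_cases T
    · simp [Real.logb]
    · have := (hΔ (a 0)).2
      have h0 : Real.logb 2 (1 : ℕ) = 0 := by norm_num
      rw [Fin.sum_univ_one, h0]
      linarith
  · have hT1 : (1:ℝ) ≤ Real.logb 2 T := by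
      rw [show (1:ℝ) = Real.logb 2 2 by simp]
      exact Real.logb_le_logb_of_le (by norm_num) (by norm_num) (by exact_mod_cast hT)
    have hlog : Real.log T ≤ Real.logb 2 T := by
      rw [Real.logb]
      have h2 : Real.log 2 < 1 := by
        have := Real.log_lt_sub_one_of_pos (by norm_num : (0:ℝ) < 2) (by norm_num)
        linarith
      have hlogT0 : 0 ≤ Real.log T := Real.log_nonneg (by exact_mod_cast Nat.one_le_of_lt hT)
      rw [le_div_iff₀ (Real.log_pos (by norm_num))]
      nlinarith
    have : M * (1 + Real.log T) ≤ 4 * Real.logb 2 T * M := by nlinarith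
    linarith
end

section
/- For the Beta distribution with integer parameters S+1 and F+1, and any y ∈ (0,1), the CDF satisfies F^{Beta}_{S+1,F+1}(y) = 1 − F^{Binom}_{S+F+1,y}(S), where F^{Binom}_{n,p}(r) is the probability that a Binomial(n,p) random variable is at most r. -/
/-!
Write `b_{n,ν}(x) = C(n,ν) x^ν (1-x)^(n-ν)` for the Bernstein polynomials. The Beta density with
parameters `S+1, F+1` is proportional to `b_{S+F,S}`, and the upper binomial tail
`T(x) = ∑_{ν > S} b_{S+F+1,ν}(x)` telescopes under differentiation to `(S+F+1) b_{S+F,S}(x)`.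
Since `T(0) = 0` and `T(1) = 1`, the Beta CDF is `T(y)`, which is `1` minus the binomial CDF because
the Bernstein polynomials of degree `S+F+1` sum to `1`.
-/

open intervalIntegral

/-- The CDF of the Beta distribution with integer parameters `S+1`, `F+1`. -/
noncomputable def betaCdf (S F : ℕ) (y : ℝ) : ℝ :=
  (∫ x in (0:ℝ)..y, x ^ S * (1 - x) ^ F) / (∫ x in (0:ℝ)..(1:ℝ), x ^ S * (1 - x) ^ F)

/-- The CDF of the Binomial distribution with `n` trials and success probability `p`,
evaluated at a real threshold `r`. -/
noncomputable def binomCdf (n : ℕ) (p r : ℝ) : ℝ :=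
  ∑ j ∈ Finset.range (n + 1),
    if (j : ℝ) ≤ r then (n.choose j : ℝ) * p ^ j * (1 - p) ^ (n - j) else 0

open Polynomial Finset

section BernsteinTail

variable (R : Type*) [CommRing R]

noncomputable def bernsteinTail (n k : ℕ) : R[X] :=
  ∑ ν ∈ Ico k (n + 1), bernsteinPolynomial R n ν

theorem sum_range_add_bernsteinTail {n k : ℕ} (h : k ≤ n + 1) :
    ∑ ν ∈ range k, bernsteinPolynomial R n ν + bernsteinTail R n k = 1 := by
  rw [bernsteinTail, sum_range_add_sum_Ico _ h, bernsteinPolynomial.sum]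

theorem eval_zero_bernsteinTail_succ (n k : ℕ) : (bernsteinTail R n (k + 1)).eval 0 = 0 := by
  simp [bernsteinTail, eval_finsetSum, bernsteinPolynomial.eval_at_0]

theorem eval_one_bernsteinTail {n k : ℕ} (h : k ≤ n) : (bernsteinTail R n k).eval 1 = 1 := by
  simp [bernsteinTail, eval_finsetSum, bernsteinPolynomial.eval_at_1, h]

theorem derivative_bernsteinTail_succ {n k : ℕ} (h : k ≤ n + 1) :
    derivative (bernsteinTail R (n + 1) (k + 1)) = (n + 1) * bernsteinPolynomial R n k := by
  have htelescope : ∑ ν ∈ Ico k (n + 1),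
      (bernsteinPolynomial R n ν - bernsteinPolynomial R n (ν + 1)) = bernsteinPolynomial R n k := by
    simpa [bernsteinPolynomial.eq_zero_of_lt R n.lt_succ_self, neg_add_eq_sub] using
      sum_Ico_sub (fun ν => -bernsteinPolynomial R n ν) h
  rw [bernsteinTail, ← sum_Ico_add', derivative_sum]
  simp only [bernsteinPolynomial.derivative_succ_aux]
  rw [← mul_sum, htelescope]

end BernsteinTail

theorem integral_eval_bernsteinPolynomial {n k : ℕ} (h : k ≤ n + 1) (a b : ℝ) :
    ∫ x in a..b, (bernsteinPolynomial ℝ n k).eval x =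
      ((bernsteinTail ℝ (n + 1) (k + 1)).eval b - (bernsteinTail ℝ (n + 1) (k + 1)).eval a) /
        (n + 1) := by
  have hderiv : ∀ x ∈ Set.uIcc a b, HasDerivAt (fun x => (bernsteinTail ℝ (n + 1) (k + 1)).eval x)
      ((n + 1) * (bernsteinPolynomial ℝ n k).eval x) x := fun x _ => by
    simpa [derivative_bernsteinTail_succ ℝ h] using (bernsteinTail ℝ (n + 1) (k + 1)).hasDerivAt x
  have hftc := integral_eq_sub_of_hasDerivAt hderiv
    ((Polynomial.continuous _).const_mul _ |>.intervalIntegrable a b)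
  rw [integral_const_mul] at hftc
  rw [← hftc]
  field_simp

theorem betaCdf_eq_eval_bernsteinTail (S F : ℕ) (y : ℝ) :
    betaCdf S F y = (bernsteinTail ℝ (S + F + 1) (S + 1)).eval y := by
  have hchoose : ((S + F).choose S : ℝ) ≠ 0 := by
    exact_mod_cast (Nat.choose_pos (Nat.le_add_right S F)).ne'
  have hdensity : (fun x : ℝ => x ^ S * (1 - x) ^ F) =
      fun x => ((S + F).choose S : ℝ)⁻¹ * (bernsteinPolynomial ℝ (S + F) S).eval x := by
    funext x
    simp only [bernsteinPolynomial, eval_mul, eval_natCast, eval_pow, eval_sub, eval_one, eval_X,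
      Nat.add_sub_cancel_left]
    field_simp
  have hS : S ≤ S + F + 1 := by omega
  rw [betaCdf, hdensity, integral_const_mul, integral_const_mul,
    mul_div_mul_left _ _ (inv_ne_zero hchoose), integral_eval_bernsteinPolynomial hS,
    integral_eval_bernsteinPolynomial hS, eval_zero_bernsteinTail_succ,
    eval_one_bernsteinTail ℝ (by omega), sub_zero, sub_zero,
    div_div_div_cancel_right₀ (by positivity), div_one]

theorem binomCdf_natCast_eq_sum {n k : ℕ} (h : k ≤ n) (p : ℝ) :
    binomCdf n p k = ∑ ν ∈ range (k + 1), (bernsteinPolynomial ℝ n ν).eval p := by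
  have hfilter : (range (n + 1)).filter (fun ν : ℕ => (ν : ℝ) ≤ k) = range (k + 1) := by
    ext ν
    simp only [mem_filter, mem_range, Nat.cast_le]
    omega
  rw [binomCdf, ← sum_filter, hfilter]
  simp [bernsteinPolynomial]

theorem betaCdf_eq_one_sub_binomCdf_general (S F : ℕ) (y : ℝ) :
    betaCdf S F y = 1 - binomCdf (S + F + 1) y S := by
  rw [betaCdf_eq_eval_bernsteinTail, binomCdf_natCast_eq_sum (by omega), eq_sub_iff_add_eq',
    ← eval_finsetSum, ← eval_add, sum_range_add_bernsteinTail ℝ (by omega), eval_one]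

/-- Beta–Binomial identity: for nonnegative integers `S, F` and `y ∈ (0,1)`,
`F^{Beta}_{S+1,F+1}(y) = 1 − F^{Binom}_{S+F+1,y}(S)`. -/
theorem betaCdf_eq_one_sub_binomCdf (S F : ℕ) (y : ℝ) (hy : y ∈ Set.Ioo (0:ℝ) 1) :
    betaCdf S F y = 1 - binomCdf (S + F + 1) y S :=
  betaCdf_eq_one_sub_binomCdf_general S F y
end

section
/- Let events be indexed by vertices of a graph, with each vertex a having gap Δ(a) ∈ (2^{−φ}, 2^{−φ+1}] within a phase φ, and suppose each vertex a in phase φ is selected (while a certain condition holds) at most L/2^{−2φ} times, where vertices selected within the same layer form an independent set. Then the total regret contribution Σ over such selections of Δ(a) from phase-φ arms is at most 4 · max over independent sets I of Σ_{a∈I} L/Δ(a). -/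
open Finset

/-- Per-phase step of the layering lemma: arms in phase `φ` have gaps
`Δ(a) ∈ (2^{−φ}, 2^{−φ+1}]`, each selection of such an arm occurs in a layer of index
at most `L/2^{−2φ}` (selections of the same arm lie in distinct layers and arms
selected within the same layer form an independent set of `G`). Then the total regret
contribution `Σ Δ(a^t)` of phase-`φ` selections is at most
`4 · max_{I independent} Σ_{a ∈ I} L/Δ(a)`, expressed via an upper bound `M` on all
independent-set sums. -/
theorem phase_regret_bound {V : Type*} [Fintype V] [DecidableEq V]
    (G : SimpleGraph V) (T : ℕ) (φ : ℤ) (L : ℝ) (hL : 0 < L)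
    (Δ : V → ℝ) (hΔpos : ∀ v, 0 < Δ v)
    (a : Fin T → V) (lay : Fin T → ℕ)
    (hphase : ∀ t : Fin T, (2:ℝ) ^ (-φ) < Δ (a t) ∧ Δ (a t) ≤ (2:ℝ) ^ (-φ + 1))
    (hlay : ∀ t : Fin T, ((lay t : ℝ) + 1) ≤ L / (2:ℝ) ^ (-2 * φ))
    (hindep : ∀ s t : Fin T, s ≠ t → lay s = lay t →
      a s ≠ a t ∧ ¬ G.Adj (a s) (a t))
    (hdistinct : ∀ s t : Fin T, s ≠ t → a s = a t → lay s ≠ lay t)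
    (M : ℝ)
    (hM : ∀ I : Finset V, (∀ u ∈ I, ∀ v ∈ I, u ≠ v → ¬ G.Adj u v) →
      ∑ v ∈ I, L / Δ v ≤ M) :
    ∑ t : Fin T, Δ (a t) ≤ 4 * M := by
  have h2ne : (2:ℝ) ≠ 0 := by norm_num
  have h2φ : (0:ℝ) < (2:ℝ) ^ (-2 * φ) := zpow_pos (by norm_num) _
  have h2φ' : (0:ℝ) < (2:ℝ) ^ (2 * φ) := zpow_pos (by norm_num) _
  have hinv : (2:ℝ) ^ (2 * φ) * (2:ℝ) ^ (-2 * φ) = 1 := by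
    rw [← zpow_add₀ h2ne]; norm_num
  set c : ℝ := 4 * (2:ℝ) ^ (-2 * φ) / L with hc
  have hc0 : 0 ≤ c := by positivity
  have hM0 : 0 ≤ M := by simpa using hM ∅ (by simp)
  set N : ℕ := ⌊L * (2:ℝ) ^ (2 * φ)⌋₊ with hN
  have hNle : (N:ℝ) ≤ L * (2:ℝ) ^ (2 * φ) := Nat.floor_le (by positivity)
  have hmaps : ∀ t : Fin T, lay t ∈ Finset.range N := by
    intro t
    have h := hlay t
    rw [div_eq_mul_inv, ← zpow_neg, show -(-2 * φ) = 2 * φ from by ring] at h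
    have h' : ((lay t + 1 : ℕ) : ℝ) ≤ L * (2:ℝ) ^ (2 * φ) := by push_cast; linarith
    have := Nat.le_floor h'
    rw [Finset.mem_range]; omega
  rw [← Finset.sum_fiberwise_of_maps_to (fun t _ => hmaps t) (fun t => Δ (a t))]
  have hlayer : ∀ ℓ ∈ Finset.range N,
      ∑ t ∈ Finset.univ.filter (fun t => lay t = ℓ), Δ (a t) ≤ c * M := by
    intro ℓ _
    set S := Finset.univ.filter (fun t : Fin T => lay t = ℓ) with hS
    have hlayS : ∀ t ∈ S, lay t = ℓ := by
      intro t ht; simpa [hS] using ht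
    have hinj : ∀ s ∈ S, ∀ t ∈ S, a s = a t → s = t := by
      intro s hs t ht hst
      by_contra hne
      exact hdistinct s t hne hst (by rw [hlayS s hs, hlayS t ht])
    rw [← Finset.sum_image hinj]
    set I := S.image a with hI
    have hIind : ∀ u ∈ I, ∀ v ∈ I, u ≠ v → ¬ G.Adj u v := by
      intro u hu v hv huv
      obtain ⟨s, hs, rfl⟩ := Finset.mem_image.mp hu
      obtain ⟨t, ht, rfl⟩ := Finset.mem_image.mp hv
      have hst : s ≠ t := fun h => huv (by rw [h])
      exact (hindep s t hst (by rw [hlayS s hs, hlayS t ht])).2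
    have hsum := hM I hIind
    have hterm : ∀ v ∈ I, Δ v ≤ c * (L / Δ v) := by
      intro v hv
      obtain ⟨t, ht, rfl⟩ := Finset.mem_image.mp hv
      have h1 := (hphase t).2
      have h0 := hΔpos (a t)
      have hsq : Δ (a t) * Δ (a t) ≤ 4 * (2:ℝ) ^ (-2 * φ) := by
        calc Δ (a t) * Δ (a t) ≤ (2:ℝ) ^ (-φ + 1) * (2:ℝ) ^ (-φ + 1) :=
              mul_le_mul h1 h1 h0.le (by positivity)
          _ = 4 * (2:ℝ) ^ (-2 * φ) := by
              rw [← zpow_add₀ h2ne, show (-φ + 1) + (-φ + 1) = (-2 * φ) + 2 by ring,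
                zpow_add₀ h2ne]
              norm_num; ring
      have heq : c * (L / Δ (a t)) = 4 * (2:ℝ) ^ (-2 * φ) / Δ (a t) := by
        rw [hc]; field_simp
      rw [heq, le_div_iff₀ h0]
      exact hsq
    calc ∑ v ∈ I, Δ v ≤ ∑ v ∈ I, c * (L / Δ v) := Finset.sum_le_sum hterm
      _ = c * ∑ v ∈ I, L / Δ v := by rw [Finset.mul_sum]
      _ ≤ c * M := mul_le_mul_of_nonneg_left hsum hc0
  calc ∑ ℓ ∈ Finset.range N, ∑ t ∈ Finset.univ.filter (fun t => lay t = ℓ), Δ (a t)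
      ≤ ∑ _ℓ ∈ Finset.range N, c * M := Finset.sum_le_sum hlayer
    _ = (N : ℝ) * (c * M) := by rw [Finset.sum_const, Finset.card_range, nsmul_eq_mul]
    _ ≤ (L * (2:ℝ) ^ (2 * φ)) * (c * M) := by
        apply mul_le_mul_of_nonneg_right hNle (by positivity)
    _ = 4 * M := by
        rw [hc]
        calc L * (2:ℝ) ^ (2 * φ) * (4 * (2:ℝ) ^ (-2 * φ) / L * M)
            = ((2:ℝ) ^ (2 * φ) * (2:ℝ) ^ (-2 * φ)) * (4 * M) * (L / L) := by ring
          _ = 4 * M := by rw [hinv, div_self hL.ne']; ring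
end
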